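/- (Minima-based multiple risk factor representation.) Let ν' = (⊗_{(i,j) ∈ {1,…,n}×{1,…,n+1}} Exp(1)) ⊗ (⊗_{j=1}^{n+1} Gamma(γ_j,1)) be the product probability measure on pairs (u, λ) with u ∈ ({1,…,n}×{1,…,n+1} → ℝ) and λ ∈ ({1,…,n+1} → ℝ), and define X_i(u,λ) = σ_i · min{ u_{i,j}/λ_j : 1 ≤ j ≤ n+1, c_{i,j} = 1 } for i = 1,…,n (so that, conditionally on λ, the u_{i,j}/λ_j are independent exponentials with rates λ_j). Then for every x = (x_1,…,x_n) with all x_i ≥ 0, ν'{(u,λ) : X_i(u,λ) > x_i for all i} = ∏_{j=1}^{n+1} (1 + ∑_{i=1}^n (c_{i,j}/σ_i)·x_i)^{−γ_j}, i.e. (X_1,…,X_n) has the multivariate Pareto Pa^c(σ,γ) distribution. -/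

import Mathlib

open MeasureTheory ProbabilityTheory Real
open scoped ENNReal

/-!
Conditionally on `λ`, the event `{X_i > x_i for all i}` is the box
`{u_{i,j} > x_i λ_j / σ_i whenever c_{i,j} = 1}` for the i.i.d. `Exp(1)` variables `u_{i,j}`,
of probability `∏_j exp(-s_j λ_j)` with `s_j = ∑_i (c_{i,j}/σ_i) x_i`. Integrating over the
independent `λ_j ~ Gamma(γ_j, 1)` factorises into the Laplace transforms
`E[exp(-s λ)] = (1 + s)^{-γ}` of the Gamma distribution.
-/

lemma Measurable.sInf_image {α δ κ : Type*} [ConditionallyCompleteLinearOrder α]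
    [TopologicalSpace α] [OrderTopology α] [SecondCountableTopology α] [MeasurableSpace α]
    [BorelSpace α] [MeasurableSpace δ] [Countable κ] {f : κ → δ → α}
    (hf : ∀ j, Measurable (f j)) (K : Set κ) :
    Measurable fun a => sInf ((fun j => f j a) '' K) := by
  simp only [Set.image_eq_range]
  exact Measurable.iInf fun j => hf j

lemma lt_mul_sInf_image_div_iff {κ : Type*} {K : Set κ} (hK : K.Finite) (hne : K.Nonempty)
    {σ x : ℝ} (hσ : 0 < σ) {u l : κ → ℝ} (hl : ∀ j ∈ K, 0 < l j) :
    x < σ * sInf ((fun j => u j / l j) '' K) ↔ ∀ j ∈ K, x / σ * l j < u j := by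
  rw [mul_comm, ← div_lt_iff₀ hσ, (hK.image _).lt_csInf_iff (hne.image _), Set.forall_mem_image]
  exact forall₂_congr fun j hj => lt_div_iff₀ (hl j hj)

lemma ae_pos_gammaMeasure (a r : ℝ) : ∀ᵐ y ∂gammaMeasure a r, 0 < y := by
  rw [ae_iff]
  simp only [not_lt]
  change gammaMeasure a r (Set.Iic 0) = 0
  rw [gammaMeasure, withDensity_apply _ measurableSet_Iic,
    setLIntegral_congr Iio_ae_eq_Iic.symm, lintegral_gammaPDF_of_nonpos le_rfl]

lemma lintegral_pi_prod_eval {ι : Type*} [Fintype ι] {Ω : ι → Type*}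
    [∀ i, MeasurableSpace (Ω i)] (μ : ∀ i, Measure (Ω i)) [∀ i, IsProbabilityMeasure (μ i)]
    {f : ∀ i, Ω i → ℝ≥0∞} (hf : ∀ i, Measurable (f i)) :
    ∫⁻ ω, ∏ i, f i (ω i) ∂Measure.pi μ = ∏ i, ∫⁻ y, f i y ∂μ i := by
  rw [lintegral_prod_eq_prod_lintegral_of_indepFun _ _
    (iIndepFun_pi fun i => (hf i).aemeasurable) fun i => (hf i).comp (measurable_pi_apply i)]
  exact Finset.prod_congr rfl fun i _ => (measurePreserving_eval μ i).lintegral_comp (hf i)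

lemma gammaPDFReal_mul_exp_neg_mul {a r s : ℝ} (hr : 0 < r) (hrs : 0 < r + s) (y : ℝ) :
    gammaPDFReal a r y * exp (-(s * y)) = (1 + s / r) ^ (-a) * gammaPDFReal a (r + s) y := by
  have hrate : (1 + s / r) ^ (-a) * (r + s) ^ a = r ^ a := by
    rw [one_add_div hr.ne', rpow_neg (div_pos hrs hr).le, div_rpow hrs.le hr.le]
    field_simp
  unfold gammaPDFReal
  split_ifs
  · rw [← hrate, mul_assoc _ (exp _), ← exp_add]
    ring_nf
  · simp

lemma lintegral_exp_neg_mul_gammaMeasure {a r s : ℝ} (ha : 0 < a) (hr : 0 < r) (hrs : 0 < r + s) :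
    ∫⁻ y, ENNReal.ofReal (exp (-(s * y))) ∂gammaMeasure a r
      = ENNReal.ofReal ((1 + s / r) ^ (-a)) := by
  have hbase : 0 < 1 + s / r := by rw [one_add_div hr.ne']; exact div_pos hrs hr
  have hpdf : ∀ b, Measurable (gammaPDF a b) := fun b =>
    (measurable_gammaPDFReal a b).ennreal_ofReal
  rw [gammaMeasure, lintegral_withDensity_eq_lintegral_mul _ (hpdf r) (by fun_prop)]
  have htilt : ∀ y, (gammaPDF a r * fun y => ENNReal.ofReal (exp (-(s * y)))) y
      = ENNReal.ofReal ((1 + s / r) ^ (-a)) * gammaPDF a (r + s) y := fun y => by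
    rw [Pi.mul_apply, gammaPDF, gammaPDF, ← ENNReal.ofReal_mul (gammaPDFReal_nonneg ha hr y),
      ← ENNReal.ofReal_mul (rpow_nonneg hbase.le _), gammaPDFReal_mul_exp_neg_mul hr hrs]
  simp only [htilt]
  rw [lintegral_const_mul _ (hpdf _), lintegral_gammaPDF_eq_one ha hrs, mul_one]

lemma expMeasure_Ioi {r t : ℝ} (hr : 0 < r) (ht : 0 ≤ t) :
    expMeasure r (Set.Ioi t) = ENNReal.ofReal (exp (-(r * t))) := by
  have := isProbabilityMeasure_expMeasure hr
  rw [← Set.compl_Iic, prob_compl_eq_one_sub measurableSet_Iic, ← ofReal_cdf,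
    cdf_expMeasure_eq hr, if_pos ht, ← ENNReal.ofReal_one,
    ← ENNReal.ofReal_sub _ (sub_nonneg.2 (exp_le_one_iff.2 (by nlinarith))), sub_sub_cancel]

lemma pi_expMeasure_setOf_forall_imp_lt {ι : Type*} [Fintype ι] (P : ι → Prop) [DecidablePred P]
    {t : ι → ℝ} (ht : ∀ i, P i → 0 ≤ t i) :
    Measure.pi (fun _ : ι => expMeasure 1) {u | ∀ i, P i → t i < u i}
      = ∏ i, if P i then ENNReal.ofReal (exp (-t i)) else 1 := by
  have : IsProbabilityMeasure (expMeasure 1) := isProbabilityMeasure_expMeasure one_pos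
  have hbox : {u : ι → ℝ | ∀ i, P i → t i < u i} = Set.univ.pi fun i => {y | P i → t i < y} := by
    ext u; simp
  rw [hbox, Measure.pi_pi]
  refine Finset.prod_congr rfl fun i _ => ?_
  split_ifs with hi
  · simp only [hi, forall_const]
    have h := expMeasure_Ioi one_pos (ht i hi)
    rwa [one_mul] at h
  · simp [hi]

lemma pi_expMeasure_setOf_lt_mul_sInf {ι κ : Type*} [Fintype ι] [Fintype κ] {K : ι → Set κ}
    [∀ i, DecidablePred (· ∈ K i)] (hK : ∀ i, (K i).Nonempty) {σ x : ι → ℝ} (hσ : ∀ i, 0 < σ i)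
    (hx : ∀ i, 0 ≤ x i) {l : κ → ℝ} (hl : ∀ j, 0 < l j) :
    Measure.pi (fun _ : ι × κ => expMeasure 1)
        {u | ∀ i, x i < σ i * sInf ((fun j => u (i, j) / l j) '' K i)}
      = ∏ q : ι × κ,
          if q.2 ∈ K q.1 then ENNReal.ofReal (exp (-(x q.1 / σ q.1 * l q.2))) else 1 := by
  have hset : {u : ι × κ → ℝ | ∀ i, x i < σ i * sInf ((fun j => u (i, j) / l j) '' K i)}
      = {u | ∀ q : ι × κ, q.2 ∈ K q.1 → x q.1 / σ q.1 * l q.2 < u q} := by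
    ext u
    simp only [Set.mem_ofPred_eq, Prod.forall,
      lt_mul_sInf_image_div_iff (Set.toFinite _) (hK _) (hσ _) fun j _ => hl j]
  rw [hset, pi_expMeasure_setOf_forall_imp_lt _ fun q _ => by
    have := hx q.1; have := hσ q.1; have := hl q.2; positivity]

lemma pi_expMeasure_setOf_lt_mul_sInf_eq_prod_exp {ι κ : Type*} [Fintype ι] [Fintype κ]
    {c : ι → κ → ℝ} (hc : ∀ i j, c i j = 0 ∨ c i j = 1) (hrow : ∀ i, ∃ j, c i j = 1)
    {σ x : ι → ℝ} (hσ : ∀ i, 0 < σ i) (hx : ∀ i, 0 ≤ x i) {l : κ → ℝ} (hl : ∀ j, 0 < l j) :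
    Measure.pi (fun _ : ι × κ => expMeasure 1)
        {u | ∀ i, x i < σ i * sInf ((fun j => u (i, j) / l j) '' {j | c i j = 1})}
      = ∏ j, ENNReal.ofReal (exp (-((∑ i, c i j / σ i * x i) * l j))) := by
  classical
  rw [pi_expMeasure_setOf_lt_mul_sInf (K := fun i => {j | c i j = 1}) hrow hσ hx hl,
    Fintype.prod_prod_type_right]
  refine Finset.prod_congr rfl fun j _ => ?_
  rw [Finset.sum_mul, ← Finset.sum_neg_distrib, exp_sum,
    ENNReal.ofReal_prod_of_nonneg fun _ _ => (exp_pos _).le]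
  refine Finset.prod_congr rfl fun i _ => ?_
  rcases hc i j with h | h
  · simp [h]
  · simp only [h, Set.mem_ofPred_eq, if_true]
    ring_nf

theorem minima_common_shock_representation_general
    (n : ℕ)
    (σ : Fin n → ℝ) (hσ : ∀ i, 0 < σ i)
    (γ : Fin (n + 1) → ℝ) (hγ : ∀ j, 0 < γ j)
    (c : Fin n → Fin (n + 1) → ℝ) (hc : ∀ i j, c i j = 0 ∨ c i j = 1)
    (hrow : ∀ i, ∃ j, c i j = 1)
    (ν' : Measure ((Fin n × Fin (n + 1) → ℝ) × (Fin (n + 1) → ℝ)))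
    (hν' : ν' = (Measure.pi fun _ : Fin n × Fin (n + 1) => gammaMeasure 1 1).prod
        (Measure.pi fun j => gammaMeasure (γ j) 1))
    (X : Fin n → (Fin n × Fin (n + 1) → ℝ) × (Fin (n + 1) → ℝ) → ℝ)
    (hX : ∀ i p, X i p
      = σ i * sInf ((fun j => p.1 (i, j) / p.2 j) '' {j | c i j = 1}))
    (x : Fin n → ℝ) (hx : ∀ i, 0 ≤ x i) :
    ν' {p | ∀ i, x i < X i p}
      = ENNReal.ofReal (∏ j, (1 + ∑ i, (c i j / σ i) * x i) ^ (-(γ j))) := by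
  have := fun j => isProbabilityMeasure_gammaMeasure (hγ j) one_pos
  have : IsProbabilityMeasure (gammaMeasure 1 1) :=
    isProbabilityMeasure_gammaMeasure one_pos one_pos
  set s : Fin (n + 1) → ℝ := fun j => ∑ i, (c i j / σ i) * x i
  have hs : ∀ j, 0 < 1 + s j := fun j => by
    have : 0 ≤ s j := Finset.sum_nonneg fun i _ =>
      mul_nonneg (div_nonneg (by rcases hc i j with h | h <;> simp [h]) (hσ i).le) (hx i)
    linarith
  have hS : MeasurableSet {p | ∀ i, x i < X i p} := by
    simp only [Set.ofPred_forall, funext₂ hX]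
    exact .iInter fun i => measurableSet_lt measurable_const
      (measurable_const.mul (Measurable.sInf_image (by fun_prop) _))
  have hslice : ∀ l : Fin (n + 1) → ℝ, (∀ j, 0 < l j) →
      Measure.pi (fun _ => gammaMeasure 1 1) ((fun u => (u, l)) ⁻¹' {p | ∀ i, x i < X i p})
        = ∏ j, ENNReal.ofReal (exp (-(s j * l j))) := fun l hl => by
    simp only [Set.preimage_ofPred_eq, hX]
    rw [show gammaMeasure 1 1 = expMeasure 1 from rfl]
    exact pi_expMeasure_setOf_lt_mul_sInf_eq_prod_exp hc hrow hσ hx hl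
  have hpos : ∀ᵐ l ∂Measure.pi fun j => gammaMeasure (γ j) 1, ∀ j, 0 < l j :=
    ae_all_iff.2 fun j => Measure.tendsto_eval_ae_ae.eventually (ae_pos_gammaMeasure _ _)
  subst hν'
  rw [Measure.prod_apply_symm hS, lintegral_congr_ae (hpos.mono hslice),
    lintegral_pi_prod_eval _ (f := fun j y => ENNReal.ofReal (exp (-(s j * y)))) (by fun_prop),
    ENNReal.ofReal_prod_of_nonneg fun j _ => rpow_nonneg (hs j).le _]
  refine Finset.prod_congr rfl fun j _ => ?_
  rw [lintegral_exp_neg_mul_gammaMeasure (hγ j) one_pos (by simpa using hs j), div_one]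

/-- minima-based multiple risk factor representation: with
`u_{i,j} ~ Exp(1)` i.i.d. and `λ_j ~ Gamma(γ_j,1)` independent, the vector
`X_i = σ_i · min{u_{i,j}/λ_j : c_{i,j} = 1}` has the multivariate Pareto `Pa^c(σ,γ)`
survival function `∏_j (1 + ∑_i (c_{i,j}/σ_i) x_i)^{-γ_j}`. -/
theorem minima_common_shock_representation
    (n : ℕ) (hn : 1 ≤ n)
    (σ : Fin n → ℝ) (hσ : ∀ i, 0 < σ i)
    (γ : Fin (n + 1) → ℝ) (hγ : ∀ j, 0 < γ j)
    (c : Fin n → Fin (n + 1) → ℝ) (hc : ∀ i j, c i j = 0 ∨ c i j = 1)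
    (hrow : ∀ i, ∃ j, c i j = 1)
    (ν' : Measure ((Fin n × Fin (n + 1) → ℝ) × (Fin (n + 1) → ℝ)))
    (hν' : ν' = (Measure.pi fun _ : Fin n × Fin (n + 1) => gammaMeasure 1 1).prod
        (Measure.pi fun j => gammaMeasure (γ j) 1))
    (X : Fin n → (Fin n × Fin (n + 1) → ℝ) × (Fin (n + 1) → ℝ) → ℝ)
    (hX : ∀ i p, X i p
      = σ i * sInf ((fun j => p.1 (i, j) / p.2 j) '' {j | c i j = 1}))
    (x : Fin n → ℝ) (hx : ∀ i, 0 ≤ x i) :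
    ν' {p | ∀ i, x i < X i p}
      = ENNReal.ofReal (∏ j, (1 + ∑ i, (c i j / σ i) * x i) ^ (-(γ j))) :=
  minima_common_shock_representation_general n σ hσ γ hγ c hc hrow ν' hν' X hX x hx
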